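/- Under the standing assumptions, the coupled adoption-opinion system admits a unique adoption-diffused equilibrium y* with s* = 0, a^{[k]*} > 0 and d^{[k]*} > 0 entrywise for both k ∈ {1,2}, opinions x^{[k]*} = (I − Λ^{[k]} W̃)^{-1}((I − Λ^{[k]} − Ξ^{[k]}) x^{[k]}(0) + Ξ^{[k]} W a^{[k]*}), and a_i^{[2]*} = (δ_i^{[1]}/δ_i^{[2]}) a_i^{[1]*} for all i. -/

import Mathlib

/-
At an adoption-diffused equilibrium the susceptible fraction vanishes, since every node feels a
positive adoption pressure, and the two outflows `δ_k a^k` coincide. Hence the whole state is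
determined by `a⁰`: `a¹ = (δ₀ / δ₁) a⁰`, the opinions solve the linear opinion equation, and the
`d`-equations give `d^k`. The normalization then says that `a⁰` is a fixed point of
`Φ(a) = 1 / (1 + δ₀/δ₁ + δ₀/(γ₁ x¹) + δ₀/(γ₀ x⁰))`. The opinions are affine in the adopters with
positive constant term `x_e`, so `Φ` is monotone and strictly subhomogeneous (`Φ(θa) < θ Φ(a)` for
`θ > 1`) on the nonnegative orthant and maps `[0,1]ⁿ` into `(0,1]ⁿ`. Knaster–Tarski gives a fixed
point, and comparing two positive fixed points at an index of maximal ratio shows it is unique.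
-/

open Matrix

/-- An adoption-diffused equilibrium: a fixed point of the coupled
adoption-opinion dynamics lying in `[0,1]^{7n}`, satisfying the normalization,
and with entrywise strictly positive adopter fractions for both technologies. -/
def IsAdoptionDiffusedEq {n : ℕ} (W Wt : Matrix (Fin n) (Fin n) ℝ)
    (β δ γ lam ξ x0 : Fin 2 → Fin n → ℝ)
    (y : (Fin n → ℝ) × (Fin 2 → Fin n → ℝ) × (Fin 2 → Fin n → ℝ) × (Fin 2 → Fin n → ℝ)) :
    Prop :=
  let s := y.1; let a := y.2.1; let d := y.2.2.1; let x := y.2.2.2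
  -- state in [0,1]^{7n}
  (∀ i, s i ∈ Set.Icc (0 : ℝ) 1) ∧
  (∀ k i, a k i ∈ Set.Icc (0 : ℝ) 1 ∧ d k i ∈ Set.Icc (0 : ℝ) 1 ∧
    x k i ∈ Set.Icc (0 : ℝ) 1) ∧
  -- normalization
  (∀ i, s i + ∑ k, (a k i + d k i) = 1) ∧
  -- fixed-point (equilibrium) equations of the dynamics
  (∀ i : Fin n, s i * ∑ k, β k i * x k i * ∑ j, W i j * a k j = 0) ∧
  (∀ (k : Fin 2) (i : Fin n),
    β k i * x k i * s i * (∑ j, W i j * a k j) - δ k i * a k i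
      + γ k i * x k i * d (1 - k) i = 0) ∧
  (∀ (k : Fin 2) (i : Fin n),
    - γ (1 - k) i * x (1 - k) i * d k i + δ k i * a k i = 0) ∧
  (∀ (k : Fin 2) (i : Fin n), x k i =
    (1 - lam k i - ξ k i) * x0 k i + lam k i * (∑ j, Wt i j * x k j)
      + ξ k i * (∑ j, W i j * a k j)) ∧
  -- adoption-diffused: strictly positive adopter fractions
  (∀ (k : Fin 2) (i : Fin n), 0 < a k i)

theorem Matrix.mulVec_mono_of_nonneg {m n R : Type*} [Fintype n] [Semiring R] [PartialOrder R]
    [IsOrderedRing R] {A : Matrix m n R} (hA : ∀ i j, 0 ≤ A i j) : Monotone (A *ᵥ ·) :=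
  fun _ _ h i => Finset.sum_le_sum fun j _ => mul_le_mul_of_nonneg_left (h j) (hA i j)

theorem Matrix.mulVec_pos_of_stochastic {m n R : Type*} [Fintype n] [Semiring R] [LinearOrder R]
    [IsStrictOrderedRing R] {A : Matrix m n R} (hA : ∀ i j, 0 ≤ A i j)
    (hrow : ∀ i, ∑ j, A i j = 1) {v : n → R} (hv : ∀ j, 0 < v j) (i : m) :
    0 < (A *ᵥ v) i := by
  obtain ⟨j, -, hj⟩ : ∃ j ∈ Finset.univ, (0 : R) < A i j :=
    Finset.exists_lt_of_sum_lt (by simp [hrow i])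
  exact Finset.sum_pos' (fun k _ => mul_nonneg (hA i k) (hv k).le)
    ⟨j, Finset.mem_univ j, mul_pos hj (hv j)⟩

theorem Matrix.diagonal_nonneg {n R : Type*} [DecidableEq n] [Zero R] [Preorder R] {v : n → R}
    (hv : 0 ≤ v) (i j : n) : 0 ≤ diagonal v i j := by
  by_cases h : i = j
  · subst h
    simpa using hv i
  · simp [h]

theorem Matrix.mulVec_one_of_sum_row_eq_one {m n R : Type*} [Fintype n] [Semiring R]
    {A : Matrix m n R} (hA : ∀ i, ∑ j, A i j = 1) : A *ᵥ 1 = 1 := by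
  ext i
  simp [mulVec, dotProduct, hA i]

theorem Matrix.eq_nonsing_inv_mulVec_iff {n α : Type*} [Fintype n] [DecidableEq n] [CommRing α]
    {A : Matrix n n α} (hA : IsUnit A) {x v : n → α} : x = A⁻¹ *ᵥ v ↔ A *ᵥ x = v := by
  have hdet := (isUnit_iff_isUnit_det A).mp hA
  constructor
  · rintro rfl
    rw [mulVec_mulVec, mul_nonsing_inv _ hdet, one_mulVec]
  · rintro rfl
    rw [mulVec_mulVec, nonsing_inv_mul _ hdet, one_mulVec]

theorem MonotoneOn.exists_isFixedPt_Icc {α : Type*} [ConditionallyCompleteLattice α]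
    {a b : α} (hab : a ≤ b) {f : α → α} (hmono : MonotoneOn f (Set.Icc a b))
    (hmaps : Set.MapsTo f (Set.Icc a b) (Set.Icc a b)) :
    ∃ x ∈ Set.Icc a b, Function.IsFixedPt f x := by
  have : Fact (a ≤ b) := ⟨hab⟩
  let F : Set.Icc a b →o Set.Icc a b := ⟨hmaps.restrict, fun x y h => hmono x.2 y.2 h⟩
  exact ⟨F.lfp, F.lfp.2, congrArg Subtype.val F.map_lfp⟩

section StrictlySubhomogeneous

variable {ι : Type*} [Fintype ι] {f : (ι → ℝ) → ι → ℝ}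

theorem le_of_isFixedPt_of_strictSubhomogeneous (hmono : MonotoneOn f (Set.Ici 0))
    (hsub : ∀ θ : ℝ, 1 < θ → ∀ a, 0 ≤ a → ∀ i, f (θ • a) i < θ * f a i)
    {a b : ι → ℝ} (ha : ∀ i, 0 < a i) (hb : 0 ≤ b)
    (hfa : Function.IsFixedPt f a) (hfb : Function.IsFixedPt f b) : b ≤ a := by
  intro i
  obtain ⟨i₀, -, hmax⟩ :=
    Finset.exists_max_image Finset.univ (fun j => b j / a j) ⟨i, Finset.mem_univ i⟩
  set θ := b i₀ / a i₀
  have hbθ : b ≤ θ • a := fun j => by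
    simpa [div_le_iff₀ (ha j)] using hmax j (Finset.mem_univ j)
  by_contra hlt
  have hθ : 1 < θ :=
    ((one_lt_div (ha i)).2 (not_le.1 hlt)).trans_le (hmax i (Finset.mem_univ i))
  have hθa : 0 ≤ θ • a := smul_nonneg (by linarith) fun j => (ha j).le
  refine lt_irrefl (b i₀) ?_
  calc b i₀ = f b i₀ := (congrFun hfb i₀).symm
    _ ≤ f (θ • a) i₀ := hmono hb hθa hbθ i₀
    _ < θ * f a i₀ := hsub θ hθ a (fun j => (ha j).le) i₀
    _ = b i₀ := by rw [hfa.eq, div_mul_cancel₀ _ (ha i₀).ne']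

theorem existsUnique_pos_isFixedPt_of_strictSubhomogeneous (hmono : MonotoneOn f (Set.Ici 0))
    (hsub : ∀ θ : ℝ, 1 < θ → ∀ a, 0 ≤ a → ∀ i, f (θ • a) i < θ * f a i)
    (hpos : ∀ a, 0 ≤ a → ∀ i, 0 < f a i) (hle : ∀ a, 0 ≤ a → f a ≤ 1) :
    ∃! a, (∀ i, 0 < a i) ∧ Function.IsFixedPt f a := by
  obtain ⟨a, ha, hfa⟩ := (hmono.mono Set.Icc_subset_Ici_self).exists_isFixedPt_Icc zero_le_one
    fun a ha => ⟨fun i => (hpos a ha.1 i).le, hle a ha.1⟩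
  have hapos : ∀ i, 0 < a i := fun i => hfa.eq ▸ hpos a ha.1 i
  refine ⟨a, ⟨hapos, hfa⟩, fun b ⟨hbpos, hfb⟩ => le_antisymm ?_ ?_⟩
  · exact le_of_isFixedPt_of_strictSubhomogeneous hmono hsub hapos (fun i => (hbpos i).le) hfa hfb
  · exact le_of_isFixedPt_of_strictSubhomogeneous hmono hsub hbpos (fun i => (hapos i).le) hfb hfa

end StrictlySubhomogeneous

section Opinion

variable {ι : Type*} [Fintype ι] [DecidableEq ι]

noncomputable def opinionOf (W Wt : Matrix ι ι ℝ) (lam ξ x0 a : ι → ℝ) : ι → ℝ :=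
  (1 - diagonal lam * Wt)⁻¹ *ᵥ ((1 - diagonal lam - diagonal ξ) *ᵥ x0 + diagonal ξ *ᵥ (W *ᵥ a))

variable {W Wt : Matrix ι ι ℝ} {lam ξ x0 : ι → ℝ}

theorem eq_opinionOf_iff (hunit : IsUnit (1 - diagonal lam * Wt)) {x a : ι → ℝ} :
    x = opinionOf W Wt lam ξ x0 a ↔ ∀ i, x i =
      (1 - lam i - ξ i) * x0 i + lam i * ∑ j, Wt i j * x j + ξ i * ∑ j, W i j * a j := by
  rw [opinionOf, eq_nonsing_inv_mulVec_iff hunit, funext_iff]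
  refine forall_congr' fun i => ?_
  simp only [sub_mulVec, ← mulVec_mulVec, one_mulVec, Pi.sub_apply, Pi.add_apply,
    mulVec_diagonal]
  simp only [mulVec, dotProduct]
  constructor <;> intro h <;> linarith

theorem opinionOf_eq_add (a : ι → ℝ) :
    opinionOf W Wt lam ξ x0 a = (1 - diagonal lam * Wt)⁻¹ *ᵥ ((1 - diagonal lam - diagonal ξ) *ᵥ x0)
      + (1 - diagonal lam * Wt)⁻¹ *ᵥ (diagonal ξ *ᵥ (W *ᵥ a)) :=
  mulVec_add _ _ _

theorem opinionOf_mono (hW : ∀ i j, 0 ≤ W i j) (hξ : 0 ≤ ξ)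
    (hM : ∀ i j, 0 ≤ (1 - diagonal lam * Wt)⁻¹ i j) : Monotone (opinionOf W Wt lam ξ x0) :=
  fun u v h => by
    rw [opinionOf_eq_add, opinionOf_eq_add]
    exact add_le_add le_rfl ((mulVec_mono_of_nonneg hM) ((mulVec_mono_of_nonneg
      (diagonal_nonneg hξ)) ((mulVec_mono_of_nonneg hW) h)))

theorem opinionOf_pos (hW : ∀ i j, 0 ≤ W i j) (hξ : 0 ≤ ξ)
    (hM : ∀ i j, 0 ≤ (1 - diagonal lam * Wt)⁻¹ i j)
    (he : ∀ i, 0 < ((1 - diagonal lam * Wt)⁻¹ *ᵥ ((1 - diagonal lam - diagonal ξ) *ᵥ x0)) i)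
    {a : ι → ℝ} (ha : 0 ≤ a) (i : ι) : 0 < opinionOf W Wt lam ξ x0 a i := by
  refine (he i).trans_le ?_
  have h := opinionOf_mono (x0 := x0) hW hξ hM ha i
  rwa [opinionOf_eq_add, mulVec_zero, mulVec_zero, mulVec_zero, add_zero] at h

theorem opinionOf_smul_le
    (he : ∀ i, 0 ≤ ((1 - diagonal lam * Wt)⁻¹ *ᵥ ((1 - diagonal lam - diagonal ξ) *ᵥ x0)) i)
    {θ : ℝ} (hθ : 1 ≤ θ) (a : ι → ℝ) :
    opinionOf W Wt lam ξ x0 (θ • a) ≤ θ • opinionOf W Wt lam ξ x0 a := by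
  intro i
  simp only [opinionOf_eq_add, mulVec_smul, Pi.add_apply, Pi.smul_apply, smul_eq_mul, mul_add]
  gcongr
  exact le_mul_of_one_le_left (he i) hθ

/- `(1 - Λ W̃) 1 = 1 - λ` because `W̃` is row-stochastic, so the inverse maps `1 - λ` to `1`; the
bracket defining `opinionOf` is at most `1 - λ` entrywise. -/
theorem opinionOf_le_one (hW : ∀ i j, 0 ≤ W i j) (hWrow : ∀ i, ∑ j, W i j = 1)
    (hWtrow : ∀ i, ∑ j, Wt i j = 1) (hξ : 0 ≤ ξ) (hlx : ∀ i, lam i + ξ i ≤ 1)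
    (hx0 : ∀ i, x0 i ∈ Set.Icc (0 : ℝ) 1) (hunit : IsUnit (1 - diagonal lam * Wt))
    (hM : ∀ i j, 0 ≤ (1 - diagonal lam * Wt)⁻¹ i j) {a : ι → ℝ} (ha : a ∈ Set.Icc 0 1) :
    opinionOf W Wt lam ξ x0 a ≤ 1 := by
  have hone : 1 = (1 - diagonal lam * Wt)⁻¹ *ᵥ (1 - lam) := by
    rw [eq_nonsing_inv_mulVec_iff hunit, sub_mulVec, ← mulVec_mulVec,
      mulVec_one_of_sum_row_eq_one hWtrow, one_mulVec]
    ext i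
    simp [mulVec_diagonal]
  have hWa : W *ᵥ a ≤ 1 :=
    (mulVec_mono_of_nonneg hW ha.2).trans (mulVec_one_of_sum_row_eq_one hWrow).le
  rw [hone]
  refine mulVec_mono_of_nonneg hM fun i => ?_
  have hx0i := hx0 i
  have hWai := hWa i
  simp only [Pi.add_apply, sub_mulVec, Pi.sub_apply, one_mulVec, mulVec_diagonal, Pi.one_apply]
    at hWai ⊢
  nlinarith [mul_nonneg (sub_nonneg.2 (hlx i)) (sub_nonneg.2 hx0i.2),
    mul_nonneg (hξ i) (sub_nonneg.2 hWai)]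

end Opinion

section Equilibrium

variable {n : ℕ} (W Wt : Matrix (Fin n) (Fin n) ℝ) (δ γ lam ξ x0 : Fin 2 → Fin n → ℝ)

/- At equilibrium both outflows `δ_k a^k` equal `δ₀ a⁰`, which fixes `a¹`, and the balance
`γ_{1-k} x^{1-k} d^k = δ_k a^k` of the `d`-equation then fixes `d^k`. -/
noncomputable def equilibriumOf (a₀ : Fin n → ℝ) :
    (Fin n → ℝ) × (Fin 2 → Fin n → ℝ) × (Fin 2 → Fin n → ℝ) × (Fin 2 → Fin n → ℝ) :=
  let a : Fin 2 → Fin n → ℝ := ![a₀, δ 0 / δ 1 * a₀]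
  let x : Fin 2 → Fin n → ℝ := fun k => opinionOf W Wt (lam k) (ξ k) (x0 k) (a k)
  (0, a, fun k => δ 0 * a₀ / (γ (1 - k) * x (1 - k)), x)

noncomputable def populationPerAdopter (a₀ : Fin n → ℝ) : Fin n → ℝ :=
  1 + δ 0 / δ 1 + δ 0 / (γ 1 * opinionOf W Wt (lam 1) (ξ 1) (x0 1) (δ 0 / δ 1 * a₀))
    + δ 0 / (γ 0 * opinionOf W Wt (lam 0) (ξ 0) (x0 0) a₀)

noncomputable def adoptionMap (a₀ : Fin n → ℝ) : Fin n → ℝ :=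
  (populationPerAdopter W Wt δ γ lam ξ x0 a₀)⁻¹

theorem sum_equilibriumOf (a₀ : Fin n → ℝ) (i : Fin n) :
    ∑ k, ((equilibriumOf W Wt δ γ lam ξ x0 a₀).2.1 k i
      + (equilibriumOf W Wt δ γ lam ξ x0 a₀).2.2.1 k i) =
      a₀ i * populationPerAdopter W Wt δ γ lam ξ x0 a₀ i := by
  simp only [equilibriumOf, populationPerAdopter, Fin.sum_univ_two, Fin.isValue, cons_val_zero,
    cons_val_one, cons_val_fin_one, sub_zero, sub_self, Pi.mul_apply, Pi.div_apply, Pi.add_apply,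
    Pi.one_apply]
  ring

end Equilibrium

section AdoptionMap

variable {n : ℕ} {W Wt : Matrix (Fin n) (Fin n) ℝ} {δ γ lam ξ x0 : Fin 2 → Fin n → ℝ}
  (hW : ∀ i j, 0 ≤ W i j) (hδ : ∀ k i, 0 < δ k i)
  (hγ : ∀ k i, 0 < γ k i) (hξ : ∀ k, 0 ≤ ξ k)
  (hM : ∀ k i j, 0 ≤ (1 - diagonal (lam k) * Wt)⁻¹ i j)
  (he : ∀ k i, 0 < ((1 - diagonal (lam k) * Wt)⁻¹ *ᵥ
    ((1 - diagonal (lam k) - diagonal (ξ k)) *ᵥ x0 k)) i)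
include hW hδ hγ hξ hM he

theorem one_le_populationPerAdopter {a : Fin n → ℝ} (ha : 0 ≤ a) (i : Fin n) :
    1 ≤ populationPerAdopter W Wt δ γ lam ξ x0 a i := by
  have hr : 0 ≤ δ 0 / δ 1 * a := mul_nonneg (fun j => (div_pos (hδ 0 j) (hδ 1 j)).le) ha
  have := opinionOf_pos hW (hξ 1) (hM 1) (he 1) hr i
  have := opinionOf_pos hW (hξ 0) (hM 0) (he 0) ha i
  have := hδ 0 i; have := hδ 1 i; have := hγ 0 i; have := hγ 1 i
  simp only [populationPerAdopter, Pi.add_apply, Pi.div_apply, Pi.mul_apply, Pi.one_apply,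
    add_assoc]
  exact le_add_of_nonneg_right (by positivity)

theorem populationPerAdopter_antitoneOn :
    AntitoneOn (populationPerAdopter W Wt δ γ lam ξ x0) (Set.Ici 0) := by
  intro u hu v _ huv i
  have hr : 0 ≤ δ 0 / δ 1 := fun j => (div_pos (hδ 0 j) (hδ 1 j)).le
  have := opinionOf_pos hW (hξ 1) (hM 1) (he 1) (mul_nonneg hr hu) i
  have := opinionOf_pos hW (hξ 0) (hM 0) (he 0) hu i
  have := hγ 0 i; have := hγ 1 i; have := hδ 0 i
  simp only [populationPerAdopter, Pi.add_apply, Pi.div_apply, Pi.mul_apply]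
  gcongr
  · exact opinionOf_mono hW (hξ 1) (hM 1) (mul_le_mul_of_nonneg_left huv hr) i
  · exact opinionOf_mono hW (hξ 0) (hM 0) huv i

theorem populationPerAdopter_lt_mul_smul {θ : ℝ} (hθ : 1 < θ) {a : Fin n → ℝ} (ha : 0 ≤ a)
    (i : Fin n) : populationPerAdopter W Wt δ γ lam ξ x0 a i <
      θ * populationPerAdopter W Wt δ γ lam ξ x0 (θ • a) i := by
  have hr : 0 ≤ δ 0 / δ 1 := fun j => (div_pos (hδ 0 j) (hδ 1 j)).le
  have hθa : 0 ≤ θ • a := smul_nonneg (by linarith) ha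
  have key : ∀ {g g' : ℝ}, 0 < g → 0 < g' → g' ≤ θ * g → δ 0 i / g ≤ θ * (δ 0 i / g') := by
    intro g g' hg hg' h
    rw [mul_div_assoc', div_le_div_iff₀ hg hg']
    nlinarith [hδ 0 i]
  have t1 := key (mul_pos (hγ 1 i) (opinionOf_pos hW (hξ 1) (hM 1) (he 1) (mul_nonneg hr ha) i))
    (mul_pos (hγ 1 i) (opinionOf_pos hW (hξ 1) (hM 1) (he 1) (mul_nonneg hr hθa) i))
    (by
      rw [mul_smul_comm, mul_left_comm]
      exact mul_le_mul_of_nonneg_left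
        (opinionOf_smul_le (fun j => (he 1 j).le) hθ.le _ i) (hγ 1 i).le)
  have t0 := key (mul_pos (hγ 0 i) (opinionOf_pos hW (hξ 0) (hM 0) (he 0) ha i))
    (mul_pos (hγ 0 i) (opinionOf_pos hW (hξ 0) (hM 0) (he 0) hθa i))
    (by
      rw [mul_left_comm]
      exact mul_le_mul_of_nonneg_left
        (opinionOf_smul_le (fun j => (he 0 j).le) hθ.le _ i) (hγ 0 i).le)
  have hone : 1 + δ 0 i / δ 1 i < θ * (1 + δ 0 i / δ 1 i) :=
    lt_mul_left (add_pos_of_pos_of_nonneg one_pos (hr i)) hθ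
  simp only [populationPerAdopter, Pi.add_apply, Pi.div_apply, Pi.mul_apply, Pi.one_apply]
  linarith

theorem existsUnique_pos_isFixedPt_adoptionMap :
    ∃! a, (∀ i, 0 < a i) ∧ Function.IsFixedPt (adoptionMap W Wt δ γ lam ξ x0) a := by
  have hD : ∀ a : Fin n → ℝ, 0 ≤ a → ∀ i, 0 < populationPerAdopter W Wt δ γ lam ξ x0 a i :=
    fun a ha i => one_pos.trans_le (one_le_populationPerAdopter hW hδ hγ hξ hM he ha i)
  refine existsUnique_pos_isFixedPt_of_strictSubhomogeneous ?_ ?_ ?_ ?_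
  · intro u hu v hv huv i
    exact inv_anti₀ (hD v hv i) (populationPerAdopter_antitoneOn hW hδ hγ hξ hM he hu hv huv i)
  · intro θ hθ a ha i
    have hθa : 0 ≤ θ • a := smul_nonneg (by linarith) ha
    simp only [adoptionMap, Pi.inv_apply]
    rw [← div_eq_mul_inv, lt_div_iff₀ (hD a ha i), inv_mul_lt_iff₀ (hD _ hθa i), mul_comm]
    exact populationPerAdopter_lt_mul_smul hW hδ hγ hξ hM he hθ ha i
  · exact fun a ha i => inv_pos.2 (hD a ha i)
  · exact fun a ha i => inv_le_one_of_one_le₀ (one_le_populationPerAdopter hW hδ hγ hξ hM he ha i)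

end AdoptionMap

namespace IsAdoptionDiffusedEq

variable {n : ℕ} {W Wt : Matrix (Fin n) (Fin n) ℝ} {β δ γ lam ξ x0 : Fin 2 → Fin n → ℝ}
  {s : Fin n → ℝ} {a d x : Fin 2 → Fin n → ℝ}

theorem opinion_pos_and_disadopter_pos (hδ : ∀ k i, 0 < δ k i)
    (hy : IsAdoptionDiffusedEq W Wt β δ γ lam ξ x0 (s, a, d, x)) :
    ∀ k i, 0 < x k i ∧ 0 < d k i := by
  obtain ⟨-, hbox, -, -, -, hout, -, hapos⟩ := hy
  dsimp only at hbox hout hapos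
  have key : ∀ k i, 0 < x (1 - k) i ∧ 0 < d k i := by
    intro k i
    have hprod : 0 < γ (1 - k) i * x (1 - k) i * d k i := by
      linarith [hout k i, mul_pos (hδ k i) (hapos k i)]
    exact ⟨(hbox (1 - k) i).2.2.1.lt_of_ne fun h => by simp [← h] at hprod,
      (hbox k i).2.1.1.lt_of_ne fun h => by simp [← h] at hprod⟩
  exact fun k i => ⟨by simpa using (key (1 - k) i).1, (key k i).2⟩

theorem susceptible_eq_zero (hW : ∀ i j, 0 ≤ W i j) (hWrow : ∀ i, ∑ j, W i j = 1)
    (hβ : ∀ k i, 0 ≤ β k i) (hβpos : ∀ i, 0 < β 0 i + β 1 i) (hδ : ∀ k i, 0 < δ k i)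
    (hy : IsAdoptionDiffusedEq W Wt β δ γ lam ξ x0 (s, a, d, x)) : s = 0 := by
  have hpos := hy.opinion_pos_and_disadopter_pos hδ
  obtain ⟨-, -, -, hinf, -, -, -, hapos⟩ := hy
  dsimp only at hinf hapos
  have hp : ∀ k i, 0 < x k i * ∑ j, W i j * a k j := fun k i =>
    mul_pos (hpos k i).1 (mulVec_pos_of_stochastic hW hWrow (hapos k) i)
  funext i
  refine (mul_eq_zero.1 (hinf i)).resolve_right (ne_of_gt ?_)
  simp only [Fin.sum_univ_two, mul_assoc]
  rcases (hβ 0 i).lt_or_eq with h0 | h0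
  · exact add_pos_of_pos_of_nonneg (mul_pos h0 (hp 0 i)) (mul_nonneg (hβ 1 i) (hp 1 i).le)
  · have h1 : 0 < β 1 i := by linarith [hβpos i]
    exact add_pos_of_nonneg_of_pos (mul_nonneg (hβ 0 i) (hp 0 i).le) (mul_pos h1 (hp 1 i))

theorem eq_equilibriumOf (hW : ∀ i j, 0 ≤ W i j) (hWrow : ∀ i, ∑ j, W i j = 1)
    (hβ : ∀ k i, 0 ≤ β k i) (hβpos : ∀ i, 0 < β 0 i + β 1 i) (hδ : ∀ k i, 0 < δ k i)
    (hunit : ∀ k, IsUnit (1 - diagonal (lam k) * Wt))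
    (hy : IsAdoptionDiffusedEq W Wt β δ γ lam ξ x0 (s, a, d, x)) :
    (s, a, d, x) = equilibriumOf W Wt δ γ lam ξ x0 (a 0) := by
  have hs := hy.susceptible_eq_zero hW hWrow hβ hβpos hδ
  obtain ⟨-, -, -, -, hin, hout, hop, hapos⟩ := hy
  dsimp only at hin hout hop hapos
  have hflux : ∀ k i, γ (1 - k) i * x (1 - k) i * d k i = δ 0 i * a 0 i := by
    refine Fin.forall_fin_two.2 ⟨fun i => ?_, fun i => ?_⟩
    · linarith [hout 0 i]
    · have h₁ := hin 1 i
      have h₀ := hout 0 i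
      simp only [hs, Pi.zero_apply, mul_zero, zero_mul, sub_self, sub_zero] at h₀ h₁
      linarith [hout 1 i]
  have ha₁ : a 1 = δ 0 / δ 1 * a 0 := funext fun i => by
    rw [Pi.mul_apply, Pi.div_apply, div_mul_eq_mul_div, eq_div_iff (hδ 1 i).ne']
    linarith [hflux 1 i, hout 1 i]
  have ha : a = ![a 0, δ 0 / δ 1 * a 0] := by
    funext k
    fin_cases k <;> simp [ha₁]
  have hx : x = fun k => opinionOf W Wt (lam k) (ξ k) (x0 k) (a k) :=
    funext fun k => (eq_opinionOf_iff (hunit k)).2 (hop k)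
  have hd : d = fun k => δ 0 * a 0 / (γ (1 - k) * x (1 - k)) := by
    funext k i
    have hne : γ (1 - k) i * x (1 - k) i ≠ 0 :=
      left_ne_zero_of_mul (hflux k i ▸ (mul_pos (hδ 0 i) (hapos 0 i)).ne')
    exact eq_div_of_mul_eq hne (by rw [mul_comm]; exact hflux k i)
  subst hs hd hx
  conv_lhs => rw [ha]
  rfl

theorem pos_isFixedPt_adoptionMap (hW : ∀ i j, 0 ≤ W i j) (hWrow : ∀ i, ∑ j, W i j = 1)
    (hβ : ∀ k i, 0 ≤ β k i) (hβpos : ∀ i, 0 < β 0 i + β 1 i) (hδ : ∀ k i, 0 < δ k i)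
    (hunit : ∀ k, IsUnit (1 - diagonal (lam k) * Wt))
    (hy : IsAdoptionDiffusedEq W Wt β δ γ lam ξ x0 (s, a, d, x)) :
    (∀ i, 0 < a 0 i) ∧ Function.IsFixedPt (adoptionMap W Wt δ γ lam ξ x0) (a 0) := by
  have heq := hy.eq_equilibriumOf hW hWrow hβ hβpos hδ hunit
  obtain ⟨-, -, hnorm, -, -, -, -, hapos⟩ := hy
  rw [heq] at hnorm
  refine ⟨hapos 0, funext fun i => ?_⟩
  have h := hnorm i
  rw [sum_equilibriumOf] at h
  exact (eq_inv_of_mul_eq_one_left (by simpa [equilibriumOf] using h)).symm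

end IsAdoptionDiffusedEq

section Construction

variable {n : ℕ} {W Wt : Matrix (Fin n) (Fin n) ℝ} {δ γ lam ξ x0 : Fin 2 → Fin n → ℝ}
  (hW : ∀ i j, 0 ≤ W i j) (hδ : ∀ k i, 0 < δ k i) (hγ : ∀ k i, 0 < γ k i) (hξ : ∀ k, 0 ≤ ξ k)
  (hM : ∀ k i j, 0 ≤ (1 - diagonal (lam k) * Wt)⁻¹ i j)
  (he : ∀ k i, 0 < ((1 - diagonal (lam k) * Wt)⁻¹ *ᵥ
    ((1 - diagonal (lam k) - diagonal (ξ k)) *ᵥ x0 k)) i)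
include hW hδ hγ hξ hM he

theorem equilibriumOf_pos {a₀ : Fin n → ℝ} (ha₀ : ∀ i, 0 < a₀ i) (k : Fin 2) (i : Fin n) :
    0 < (equilibriumOf W Wt δ γ lam ξ x0 a₀).2.1 k i ∧
      0 < (equilibriumOf W Wt δ γ lam ξ x0 a₀).2.2.1 k i ∧
      0 < (equilibriumOf W Wt δ γ lam ξ x0 a₀).2.2.2 k i := by
  have ha : ∀ k i, 0 < ![a₀, δ 0 / δ 1 * a₀] k i :=
    Fin.forall_fin_two.2 ⟨ha₀, fun i => mul_pos (div_pos (hδ 0 i) (hδ 1 i)) (ha₀ i)⟩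
  have hx : ∀ k i, 0 < opinionOf W Wt (lam k) (ξ k) (x0 k) (![a₀, δ 0 / δ 1 * a₀] k) i :=
    fun k i => opinionOf_pos hW (hξ k) (hM k) (he k) (fun j => (ha k j).le) i
  exact ⟨ha k i, div_pos (mul_pos (hδ 0 i) (ha₀ i)) (mul_pos (hγ _ i) (hx _ i)), hx k i⟩

theorem isAdoptionDiffusedEq_equilibriumOf (β : Fin 2 → Fin n → ℝ)
    (hWrow : ∀ i, ∑ j, W i j = 1) (hWtrow : ∀ i, ∑ j, Wt i j = 1)
    (hlx : ∀ k i, lam k i + ξ k i ≤ 1) (hx0 : ∀ k i, x0 k i ∈ Set.Icc (0 : ℝ) 1)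
    (hunit : ∀ k, IsUnit (1 - diagonal (lam k) * Wt)) {a₀ : Fin n → ℝ} (ha₀ : ∀ i, 0 < a₀ i)
    (hfix : Function.IsFixedPt (adoptionMap W Wt δ γ lam ξ x0) a₀) :
    IsAdoptionDiffusedEq W Wt β δ γ lam ξ x0 (equilibriumOf W Wt δ γ lam ξ x0 a₀) := by
  set y := equilibriumOf W Wt δ γ lam ξ x0 a₀ with hy_def
  have hs : y.1 = 0 := rfl
  have hpos : ∀ k i, 0 < y.2.1 k i ∧ 0 < y.2.2.1 k i ∧ 0 < y.2.2.2 k i :=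
    equilibriumOf_pos hW hδ hγ hξ hM he ha₀
  have hnorm : ∀ i, ∑ k, (y.2.1 k i + y.2.2.1 k i) = 1 := fun i => by
    rw [hy_def, sum_equilibriumOf, ← congrFun hfix.eq i, adoptionMap, Pi.inv_apply, inv_mul_cancel₀]
    exact (one_pos.trans_le (one_le_populationPerAdopter hW hδ hγ hξ hM he
      (fun j => (ha₀ j).le) i)).ne'
  have hle : ∀ k i, y.2.1 k i ≤ 1 ∧ y.2.2.1 k i ≤ 1 := by
    refine Fin.forall_fin_two.2 ⟨fun i => ?_, fun i => ?_⟩ <;>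
    · have h := hnorm i
      rw [Fin.sum_univ_two] at h
      constructor <;> linarith [hpos 0 i, hpos 1 i]
  have hout : ∀ k i, δ k i * y.2.1 k i = δ 0 i * a₀ i := by
    refine Fin.forall_fin_two.2 ⟨fun i => rfl, fun i => ?_⟩
    show δ 1 i * (δ 0 i / δ 1 i * a₀ i) = δ 0 i * a₀ i
    field_simp [(hδ 1 i).ne']
  have hin : ∀ k i, γ (1 - k) i * y.2.2.2 (1 - k) i * y.2.2.1 k i = δ 0 i * a₀ i :=
    fun k i => mul_div_cancel₀ _ (mul_pos (hγ _ i) (hpos _ i).2.2).ne'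
  refine ⟨fun i => ⟨le_rfl, zero_le_one⟩, fun k i => ⟨⟨(hpos k i).1.le, (hle k i).1⟩,
    ⟨(hpos k i).2.1.le, (hle k i).2⟩, ⟨(hpos k i).2.2.le, ?_⟩⟩, fun i => ?_, fun i => zero_mul _,
    fun k i => ?_, fun k i => ?_, fun k i => ?_, fun k i => (hpos k i).1⟩
  · exact opinionOf_le_one hW hWrow hWtrow (hξ k) (hlx k) (hx0 k) (hunit k) (hM k)
      ⟨fun j => (hpos k j).1.le, fun j => (hle k j).1⟩ i
  · rw [hs, Pi.zero_apply, zero_add]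
    exact hnorm i
  · have h := hin (1 - k) i
    rw [sub_sub_cancel] at h
    rw [hs, Pi.zero_apply, mul_zero, zero_mul, zero_sub]
    linarith [hout k i]
  · linarith [hin k i, hout k i]
  · exact (eq_opinionOf_iff (hunit k)).1 rfl i

end Construction

theorem stmt14_general {n : ℕ} (W Wt : Matrix (Fin n) (Fin n) ℝ)
    (β δ γ lam ξ x0 : Fin 2 → Fin n → ℝ)
    (hW : ∀ i j, 0 ≤ W i j) (hWrow : ∀ i, ∑ j, W i j = 1)
    (hWtrow : ∀ i, ∑ j, Wt i j = 1)
    (hβnn : ∀ k i, 0 ≤ β k i) (hβ : ∀ i, 0 < β 0 i + β 1 i ∧ β 0 i + β 1 i < 1)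
    (hδ : ∀ k i, 0 < δ k i ∧ δ k i ≤ 1) (hγ : ∀ k i, 0 < γ k i ∧ γ k i < 1)
    (hξ : ∀ k i, 0 < ξ k i)
    (hlx : ∀ k i, lam k i + ξ k i < 1)
    (hx0 : ∀ k i, x0 k i ∈ Set.Icc (0 : ℝ) 1)
    (hunit : ∀ k : Fin 2, IsUnit (1 - Matrix.diagonal (lam k) * Wt))
    (hMnn : ∀ (k : Fin 2) (i j : Fin n), 0 ≤ (1 - Matrix.diagonal (lam k) * Wt)⁻¹ i j)
    -- Assumption 1 (stubborn-community reachability): x_e^{[k]} > 0 entrywise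
    (hxe : ∀ (k : Fin 2) (i : Fin n),
      0 < ((1 - Matrix.diagonal (lam k) * Wt)⁻¹ *ᵥ
        ((1 - Matrix.diagonal (lam k) - Matrix.diagonal (ξ k)) *ᵥ x0 k)) i) :
    (∃! y : (Fin n → ℝ) × (Fin 2 → Fin n → ℝ) × (Fin 2 → Fin n → ℝ) ×
        (Fin 2 → Fin n → ℝ), IsAdoptionDiffusedEq W Wt β δ γ lam ξ x0 y) ∧
    (∀ y, IsAdoptionDiffusedEq W Wt β δ γ lam ξ x0 y →
      (∀ i, y.1 i = 0) ∧
      (∀ (k : Fin 2) (i : Fin n), 0 < y.2.2.1 k i) ∧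
      (∀ k : Fin 2, y.2.2.2 k = (1 - Matrix.diagonal (lam k) * Wt)⁻¹ *ᵥ
        ((1 - Matrix.diagonal (lam k) - Matrix.diagonal (ξ k)) *ᵥ x0 k
          + Matrix.diagonal (ξ k) *ᵥ (W *ᵥ y.2.1 k))) ∧
      (∀ i : Fin n, y.2.1 1 i = (δ 0 i / δ 1 i) * y.2.1 0 i)) := by
  have hδ₀ : ∀ k i, 0 < δ k i := fun k i => (hδ k i).1
  have hγ₀ : ∀ k i, 0 < γ k i := fun k i => (hγ k i).1
  have hξ₀ : ∀ k, 0 ≤ ξ k := fun k i => (hξ k i).le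
  have hβ₀ : ∀ i, 0 < β 0 i + β 1 i := fun i => (hβ i).1
  have heq : ∀ {s a d x}, IsAdoptionDiffusedEq W Wt β δ γ lam ξ x0 (s, a, d, x) →
      (s, a, d, x) = equilibriumOf W Wt δ γ lam ξ x0 (a 0) :=
    fun hy => hy.eq_equilibriumOf hW hWrow hβnn hβ₀ hδ₀ hunit
  obtain ⟨a₀, ⟨ha₀, hfix⟩, huniq⟩ :=
    existsUnique_pos_isFixedPt_adoptionMap hW hδ₀ hγ₀ hξ₀ hMnn hxe
  refine ⟨⟨_, isAdoptionDiffusedEq_equilibriumOf hW hδ₀ hγ₀ hξ₀ hMnn hxe β hWrow hWtrow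
    (fun k i => (hlx k i).le) hx0 hunit ha₀ hfix, fun ⟨s, a, d, x⟩ hy => ?_⟩,
    fun ⟨s, a, d, x⟩ hy => ⟨fun i => ?_, fun k i => (hy.opinion_pos_and_disadopter_pos hδ₀ k i).2, fun k => ?_, fun i => ?_⟩⟩
  · rw [heq hy]
    exact congrArg _ (huniq _ (hy.pos_isFixedPt_adoptionMap hW hWrow hβnn hβ₀ hδ₀ hunit))
  all_goals rw [heq hy]; rfl

/-- Theorem 5: under Assumption 1 the system admits a unique adoption-diffused
equilibrium `y*`; it satisfies `s* = 0`, `a^{[k]*}, d^{[k]*} > 0`,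
`x^{[k]*} = (I − Λ^{[k]}W̃)⁻¹((I − Λ^{[k]} − Ξ^{[k]}) x^{[k]}(0) + Ξ^{[k]} W a^{[k]*})`
and `a_i^{[2]*} = (δ_i^{[1]}/δ_i^{[2]}) a_i^{[1]*}` for all `i`. -/
theorem stmt14 {n : ℕ} (W Wt : Matrix (Fin n) (Fin n) ℝ)
    (β δ γ lam ξ x0 : Fin 2 → Fin n → ℝ)
    (hW : ∀ i j, 0 ≤ W i j) (hWrow : ∀ i, ∑ j, W i j = 1)
    (hWt : ∀ i j, 0 ≤ Wt i j) (hWtrow : ∀ i, ∑ j, Wt i j = 1)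
    -- W irreducible: its directed graph is strongly connected
    (hirr : ∀ i j : Fin n, ∃ m : ℕ, 0 < m ∧ 0 < (W ^ m) i j)
    (hβnn : ∀ k i, 0 ≤ β k i) (hβ : ∀ i, 0 < β 0 i + β 1 i ∧ β 0 i + β 1 i < 1)
    (hδ : ∀ k i, 0 < δ k i ∧ δ k i ≤ 1) (hγ : ∀ k i, 0 < γ k i ∧ γ k i < 1)
    (hlam : ∀ k i, 0 ≤ lam k i) (hξ : ∀ k i, 0 < ξ k i)
    (hlx : ∀ k i, lam k i + ξ k i < 1)
    (hx0 : ∀ k i, x0 k i ∈ Set.Icc (0 : ℝ) 1)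
    (hunit : ∀ k : Fin 2, IsUnit (1 - Matrix.diagonal (lam k) * Wt))
    (hMnn : ∀ (k : Fin 2) (i j : Fin n), 0 ≤ (1 - Matrix.diagonal (lam k) * Wt)⁻¹ i j)
    -- Assumption 1 (stubborn-community reachability): x_e^{[k]} > 0 entrywise
    (hxe : ∀ (k : Fin 2) (i : Fin n),
      0 < ((1 - Matrix.diagonal (lam k) * Wt)⁻¹ *ᵥ
        ((1 - Matrix.diagonal (lam k) - Matrix.diagonal (ξ k)) *ᵥ x0 k)) i) :
    (∃! y : (Fin n → ℝ) × (Fin 2 → Fin n → ℝ) × (Fin 2 → Fin n → ℝ) ×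
        (Fin 2 → Fin n → ℝ), IsAdoptionDiffusedEq W Wt β δ γ lam ξ x0 y) ∧
    (∀ y, IsAdoptionDiffusedEq W Wt β δ γ lam ξ x0 y →
      (∀ i, y.1 i = 0) ∧
      (∀ (k : Fin 2) (i : Fin n), 0 < y.2.2.1 k i) ∧
      (∀ k : Fin 2, y.2.2.2 k = (1 - Matrix.diagonal (lam k) * Wt)⁻¹ *ᵥ
        ((1 - Matrix.diagonal (lam k) - Matrix.diagonal (ξ k)) *ᵥ x0 k
          + Matrix.diagonal (ξ k) *ᵥ (W *ᵥ y.2.1 k))) ∧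
      (∀ i : Fin n, y.2.1 1 i = (δ 0 i / δ 1 i) * y.2.1 0 i)) :=
  stmt14_general W Wt β δ γ lam ξ x0 hW hWrow hWtrow hβnn hβ hδ hγ hξ hlx hx0 hunit hMnn hxe
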